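/- arXiv:1603.04505 — 6 statements merged into one kernel-verified Lean document; each statement's English description precedes it below -/
import Mathlib

section
/- Partial derivatives of the EMUS estimator (ensemble-average case): Let F ∈ ℝ^{L×L} be an irreducible row-stochastic matrix with unique probability left invariant vector z(F), let G be a group inverse of I − F, and let g, u ∈ ℝ^L be vectors with Σ_{k=1}^L z_k(F) u_k ≠ 0. Define B(F, g, u) = (Σ_{k=1}^L z_k(F) g_k)/(Σ_{k=1}^L z_k(F) u_k). Assume that for every matrix E ∈ ℝ^{L×L} whose rows each sum to zero, the map ε ↦ z(F + εE) is differentiable at ε = 0 with (d/dε)|_{ε=0} z_k(F + εE) = Σ_{i,j=1}^L z_i(F) E_{ij} G_{jk}. Then: (a) ∂B/∂g_i = z_i(F)/(Σ_k z_k(F) u_k); (b) ∂B/∂u_i = −B(F, g, u) · z_i(F)/(Σ_k z_k(F) u_k); and (c) for every E with zero row sums, (d/dε)|_{ε=0} B(F + εE, g, u) = [ Σ_{i,j=1}^L E_{ij} z_i(F) Σ_{k=1}^L G_{jk} ( g_k − B(F, g, u) u_k ) ] / ( Σ_{k=1}^L z_k(F) u_k ). -/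
/-
The estimator is a ratio of two linear functionals of the invariant vector, so all three
formulas are instances of the quotient rule `(N / D)' = (N' - (N / D) D') / D`. For `g` and `u`
the functionals are linear in the varied coordinate; for a perturbation `F + εE` the derivative
of `z` is the assumed Golub–Meyer formula, and regrouping the resulting triple sum puts it
in the stated form.
-/

/-- A matrix is irreducible if for every partition of the index set into two
nonempty sets A and B there are i ∈ A, j ∈ B with J i j ≠ 0. -/
def MatIrreducible {L : ℕ} (J : Matrix (Fin L) (Fin L) ℝ) : Prop :=
  ∀ A : Finset (Fin L), A.Nonempty → Aᶜ.Nonempty → ∃ i ∈ A, ∃ j ∈ Aᶜ, J i j ≠ 0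

/-- A matrix is row-stochastic if its entries are nonnegative and each row sums to one. -/
def RowStochastic {L : ℕ} (J : Matrix (Fin L) (Fin L) ℝ) : Prop :=
  (∀ i j, 0 ≤ J i j) ∧ ∀ i, ∑ j, J i j = 1

/-- G is a group inverse of M: MGM = M, GMG = G, MG = GM. -/
def IsGroupInverse {L : ℕ} (M G : Matrix (Fin L) (Fin L) ℝ) : Prop :=
  M * G * M = M ∧ G * M * G = G ∧ M * G = G * M

open Finset

theorem HasDerivAt.div_ratio {f g : ℝ → ℝ} {f' g' x : ℝ} (hf : HasDerivAt f f' x)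
    (hg : HasDerivAt g g' x) (hx : g x ≠ 0) :
    HasDerivAt (fun t => f t / g t) ((f' - f x / g x * g') / g x) x := by
  refine (hf.fun_div hg hx).congr_deriv ?_
  rw [div_mul_eq_mul_div, sub_div' hx, div_div, sq]

theorem hasDerivAt_sum_mul_update {ι : Type*} [Fintype ι] [DecidableEq ι]
    (z v : ι → ℝ) (i : ι) (t : ℝ) :
    HasDerivAt (fun s => ∑ k, z k * Function.update v i s k) (z i) t := by
  have hcoord k := (hasDerivAt_pi.mp (hasDerivAt_update v i t) k).const_mul (z k)
  simpa [Pi.single_apply] using HasDerivAt.fun_sum (u := univ) fun k _ => hcoord k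

theorem sum_sum_mul_mul_sum_mul {R ι κ μ : Type*} [CommSemiring R] [Fintype ι] [Fintype κ]
    [Fintype μ] (z : ι → R) (E : Matrix ι κ R) (G : Matrix κ μ R) (w : μ → R) :
    ∑ k, (∑ i, ∑ j, z i * E i j * G j k) * w k =
      ∑ i, ∑ j, E i j * (z i * ∑ k, G j k * w k) := by
  simp only [sum_mul, mul_sum]
  rw [sum_comm]
  refine sum_congr rfl fun i _ => ?_
  rw [sum_comm]
  exact sum_congr rfl fun j _ => sum_congr rfl fun k _ => by ring

theorem emus_estimator_partial_derivatives_general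
    {L : ℕ}
    (F : Matrix (Fin L) (Fin L) ℝ)
    (zfun : Matrix (Fin L) (Fin L) ℝ → Fin L → ℝ)
    (G : Matrix (Fin L) (Fin L) ℝ)
    (g u : Fin L → ℝ)
    (hu : ∑ k, zfun F k * u k ≠ 0)
    (hderiv : ∀ E : Matrix (Fin L) (Fin L) ℝ, (∀ i, ∑ j, E i j = 0) → ∀ k,
      HasDerivAt (fun ε : ℝ => zfun (F + ε • E) k)
        (∑ i, ∑ j, zfun F i * E i j * G j k) 0)
    (B : Matrix (Fin L) (Fin L) ℝ → (Fin L → ℝ) → (Fin L → ℝ) → ℝ)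
    (hB : ∀ F' g' u', B F' g' u' =
      (∑ k, zfun F' k * g' k) / (∑ k, zfun F' k * u' k)) :
    (∀ i, HasDerivAt (fun t : ℝ => B F (Function.update g i t) u)
        (zfun F i / ∑ k, zfun F k * u k) (g i)) ∧
    (∀ i, HasDerivAt (fun t : ℝ => B F g (Function.update u i t))
        (-(B F g u * (zfun F i / ∑ k, zfun F k * u k))) (u i)) ∧
    (∀ E : Matrix (Fin L) (Fin L) ℝ, (∀ i, ∑ j, E i j = 0) →
      HasDerivAt (fun ε : ℝ => B (F + ε • E) g u)
        ((∑ i, ∑ j, E i j * (zfun F i * ∑ k, G j k * (g k - B F g u * u k))) /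
          (∑ k, zfun F k * u k)) 0) := by
  simp_rw [hB]
  refine ⟨fun i => ?_, fun i => ?_, fun E hE => ?_⟩
  · exact (hasDerivAt_sum_mul_update (zfun F) g i (g i)).div_const _
  · convert (hasDerivAt_const (u i) (∑ k, zfun F k * g k)).div_ratio
      (hasDerivAt_sum_mul_update (zfun F) u i (u i)) (by simpa using hu) using 1
    simp only [Function.update_eq_self]
    ring
  · have hweighted (w : Fin L → ℝ) :=
      HasDerivAt.fun_sum (u := univ) fun k _ => (hderiv E hE k).mul_const (w k)
    have hF : F + (0 : ℝ) • E = F := by simp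
    have hratio := (hweighted g).div_ratio (hweighted u) (by rwa [hF])
    rw [hF] at hratio
    convert hratio using 2
    rw [← sum_sum_mul_mul_sum_mul, mul_sum, ← sum_sub_distrib]
    exact sum_congr rfl fun k _ => by ring

/-- **Partial derivatives of the EMUS estimator (ensemble-average case):**
with B(F, g, u) = (∑ k z k(F) g k)/(∑ k z k(F) u k), assuming the Golub–Meyer
derivative formula for z, one has
(a) ∂B/∂g i = z i(F)/(∑ z u),
(b) ∂B/∂u i = −B·z i(F)/(∑ z u), and
(c) for every E with zero row sums,
(d/dε)|₀ B(F + εE, g, u) = [∑ i j, E i j z i(F) ∑ k, G j k (g k − B u k)]/(∑ z u). -/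
theorem emus_estimator_partial_derivatives
    {L : ℕ}
    (F : Matrix (Fin L) (Fin L) ℝ)
    (hFirr : MatIrreducible F) (hFstoch : RowStochastic F)
    (zfun : Matrix (Fin L) (Fin L) ℝ → Fin L → ℝ)
    (hzinv : Matrix.vecMul (zfun F) F = zfun F)
    (hzsum : ∑ i, zfun F i = 1)
    (G : Matrix (Fin L) (Fin L) ℝ)
    (hG : IsGroupInverse (1 - F) G)
    (g u : Fin L → ℝ)
    (hu : ∑ k, zfun F k * u k ≠ 0)
    (hderiv : ∀ E : Matrix (Fin L) (Fin L) ℝ, (∀ i, ∑ j, E i j = 0) → ∀ k,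
      HasDerivAt (fun ε : ℝ => zfun (F + ε • E) k)
        (∑ i, ∑ j, zfun F i * E i j * G j k) 0)
    (B : Matrix (Fin L) (Fin L) ℝ → (Fin L → ℝ) → (Fin L → ℝ) → ℝ)
    (hB : ∀ F' g' u', B F' g' u' =
      (∑ k, zfun F' k * g' k) / (∑ k, zfun F' k * u' k)) :
    (∀ i, HasDerivAt (fun t : ℝ => B F (Function.update g i t) u)
        (zfun F i / ∑ k, zfun F k * u k) (g i)) ∧
    (∀ i, HasDerivAt (fun t : ℝ => B F g (Function.update u i t))
        (-(B F g u * (zfun F i / ∑ k, zfun F k * u k))) (u i)) ∧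
    (∀ E : Matrix (Fin L) (Fin L) ℝ, (∀ i, ∑ j, E i j = 0) →
      HasDerivAt (fun ε : ℝ => B (F + ε • E) g u)
        ((∑ i, ∑ j, E i j * (zfun F i * ∑ k, G j k * (g k - B F g u * u k))) /
          (∑ k, zfun F k * u k)) 0) :=
  emus_estimator_partial_derivatives_general F zfun G g u hu hderiv B hB
end

section
/- EMUS combined-average identity: Let g : X → ℝ be π-integrable. Then ⟨g⟩ := ∫ g dπ = ( Σ_{i=1}^L z_i ⟨g*⟩_i ) / ( Σ_{i=1}^L z_i ⟨1*⟩_i ), where g* = g/Σ_{k=1}^L ψ_k, 1* = 1/Σ_{k=1}^L ψ_k, and all the averages ⟨g*⟩_i and ⟨1*⟩_i are finite. -/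
/-!
Averaging against `π_i` is integrating against `ψ_i π` and dividing by `∫ ψ_i dπ`, a factor that
the weight `z_i` replaces by the common constant `S = ∑ₖ ∫ ψ_k dπ`. Hence
`∑ᵢ z_i ⟨g*⟩_i = S⁻¹ ∫ (∑ᵢ ψ_i) g* dπ = S⁻¹ ∫ g dπ`, the `ψ_i / ∑ₖ ψ_k` being a partition of
unity. For `g = 1` the same computation gives `S⁻¹`, and the quotient is `∫ g dπ`.
-/

open MeasureTheory Finset

section BiasedMeasure

variable {X : Type*} [MeasurableSpace X] {μ : Measure X} {ψ : X → ℝ}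

lemma integrable_withDensity_ofReal_iff (hψ : AEMeasurable ψ μ) (hψ0 : ∀ᵐ x ∂μ, 0 ≤ ψ x)
    {f : X → ℝ} :
    Integrable f (μ.withDensity fun x => ENNReal.ofReal (ψ x)) ↔
      Integrable (fun x => ψ x * f x) μ := by
  rw [integrable_withDensity_iff_integrable_smul₀' hψ.ennreal_ofReal (by simp)]
  refine integrable_congr ?_
  filter_upwards [hψ0] with x hx
  simp [ENNReal.toReal_ofReal hx]

lemma integral_withDensity_ofReal (hψ : AEMeasurable ψ μ) (hψ0 : ∀ᵐ x ∂μ, 0 ≤ ψ x)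
    (f : X → ℝ) :
    ∫ x, f x ∂(μ.withDensity fun x => ENNReal.ofReal (ψ x)) = ∫ x, ψ x * f x ∂μ := by
  rw [integral_withDensity_eq_integral_toReal_smul₀ hψ.ennreal_ofReal (by simp)]
  refine integral_congr_ae ?_
  filter_upwards [hψ0] with x hx
  simp [ENNReal.toReal_ofReal hx]

variable (μ ψ) in
/-- The biased distribution `π_i` of the paper, for `ψ = ψ_i`. -/
noncomputable def biasedMeasure : Measure X :=
  (ENNReal.ofReal (∫ x, ψ x ∂μ))⁻¹ • μ.withDensity fun x => ENNReal.ofReal (ψ x)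

lemma integrable_biasedMeasure_iff (hψ : AEMeasurable ψ μ) (hψ0 : ∀ᵐ x ∂μ, 0 ≤ ψ x)
    (hψpos : 0 < ∫ x, ψ x ∂μ) {f : X → ℝ} :
    Integrable f (biasedMeasure μ ψ) ↔ Integrable (fun x => ψ x * f x) μ := by
  rw [biasedMeasure, integrable_smul_measure (by simp) (by simpa using hψpos),
    integrable_withDensity_ofReal_iff hψ hψ0]

lemma integral_biasedMeasure (hψ : AEMeasurable ψ μ) (hψ0 : ∀ᵐ x ∂μ, 0 ≤ ψ x) (f : X → ℝ) :
    ∫ x, f x ∂(biasedMeasure μ ψ) = (∫ x, ψ x ∂μ)⁻¹ * ∫ x, ψ x * f x ∂μ := by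
  rw [biasedMeasure, integral_smul_measure, integral_withDensity_ofReal hψ hψ0, smul_eq_mul,
    ENNReal.toReal_inv, ENNReal.toReal_ofReal (integral_nonneg_of_ae hψ0)]

end BiasedMeasure

section PartitionOfUnity

variable {X : Type*} [MeasurableSpace X] {μ : Measure X} {ι : Type*} [Fintype ι]
  {ψ : ι → X → ℝ} {g : X → ℝ}

/-- Since `0 ≤ ψ i ≤ ∑ k, ψ k`, the function `ψ i * g*` is dominated by `‖g‖`. -/
lemma integrable_mul_div_sum (hψ : ∀ i, AEMeasurable (ψ i) μ)
    (hψ0 : ∀ i x, 0 ≤ ψ i x) (hg : Integrable g μ) (i : ι) :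
    Integrable (fun x => ψ i x * (g x / ∑ k, ψ k x)) μ := by
  have hmeas : AEMeasurable (fun x => ψ i x * (g x / ∑ k, ψ k x)) μ := by
    have := hg.aemeasurable
    fun_prop
  refine hg.norm.mono' hmeas.aestronglyMeasurable (.of_forall fun x => ?_)
  have hle : ψ i x ≤ ∑ k, ψ k x := single_le_sum (fun k _ => hψ0 k x) (mem_univ i)
  have hratio : ψ i x / ∑ k, ψ k x ≤ 1 := div_le_one_of_le₀ hle ((hψ0 i x).trans hle)
  calc ‖ψ i x * (g x / ∑ k, ψ k x)‖ = (ψ i x / ∑ k, ψ k x) * ‖g x‖ := by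
        rw [mul_div_assoc', div_mul_eq_mul_div, norm_div, norm_mul, Real.norm_of_nonneg (hψ0 i x),
          Real.norm_of_nonneg (sum_nonneg fun k _ => hψ0 k x)]
    _ ≤ ‖g x‖ := mul_le_of_le_one_left (norm_nonneg _) hratio

lemma sum_integral_mul_div_sum (hψ : ∀ i, AEMeasurable (ψ i) μ)
    (hψ0 : ∀ i x, 0 ≤ ψ i x) (hsum : ∀ x, ∑ k, ψ k x ≠ 0) (hg : Integrable g μ) :
    ∑ i, ∫ x, ψ i x * (g x / ∑ k, ψ k x) ∂μ = ∫ x, g x ∂μ := by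
  rw [← integral_finsetSum _ fun i _ => integrable_mul_div_sum hψ hψ0 hg i]
  congr 1 with x
  rw [← sum_mul, mul_div_cancel₀ _ (hsum x)]

lemma integrable_div_sum_biasedMeasure (hψ : ∀ i, AEMeasurable (ψ i) μ)
    (hψ0 : ∀ i x, 0 ≤ ψ i x) (hψpos : ∀ i, 0 < ∫ x, ψ i x ∂μ) (hg : Integrable g μ) (i : ι) :
    Integrable (fun x => g x / ∑ k, ψ k x) (biasedMeasure μ (ψ i)) :=
  (integrable_biasedMeasure_iff (hψ i) (.of_forall (hψ0 i)) (hψpos i)).2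
    (integrable_mul_div_sum hψ hψ0 hg i)

lemma sum_mul_integral_biasedMeasure_div_sum (hψ : ∀ i, AEMeasurable (ψ i) μ)
    (hψ0 : ∀ i x, 0 ≤ ψ i x) (hψpos : ∀ i, 0 < ∫ x, ψ i x ∂μ) (hsum : ∀ x, ∑ k, ψ k x ≠ 0)
    (hg : Integrable g μ) :
    ∑ i, (∫ x, ψ i x ∂μ) / (∑ k, ∫ x, ψ k x ∂μ) *
        ∫ x, g x / ∑ k, ψ k x ∂(biasedMeasure μ (ψ i)) =
      (∑ k, ∫ x, ψ k x ∂μ)⁻¹ * ∫ x, g x ∂μ := by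
  rw [← sum_integral_mul_div_sum hψ hψ0 hsum hg, mul_sum]
  refine sum_congr rfl fun i _ => ?_
  rw [integral_biasedMeasure (hψ i) (.of_forall (hψ0 i))]
  field_simp [(hψpos i).ne']

end PartitionOfUnity

theorem emus_combined_average_identity_general
    {X : Type*} [MeasurableSpace X] (π : Measure X) [IsProbabilityMeasure π]
    {L : ℕ} (ψ : Fin L → X → ℝ)
    (hψmeas : ∀ i, Measurable (ψ i)) (hψnonneg : ∀ i x, 0 ≤ ψ i x)
    (hψpos : ∀ i, 0 < ∫ x, ψ i x ∂π)
    (hsumpos : ∀ x, 0 < ∑ k, ψ k x)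
    (πb : Fin L → Measure X)
    (hπb : ∀ i, πb i = (ENNReal.ofReal (∫ x, ψ i x ∂π))⁻¹ •
      π.withDensity fun x => ENNReal.ofReal (ψ i x))
    (z : Fin L → ℝ)
    (hz : ∀ i, z i = (∫ x, ψ i x ∂π) / ∑ k, ∫ x, ψ k x ∂π)
    (g : X → ℝ) (hg : Integrable g π) :
    (∀ i, Integrable (fun x => g x / ∑ k, ψ k x) (πb i)) ∧
    (∀ i, Integrable (fun x => 1 / ∑ k, ψ k x) (πb i)) ∧
    ∫ x, g x ∂π =
      (∑ i, z i * ∫ x, g x / ∑ k, ψ k x ∂(πb i)) /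
      (∑ i, z i * ∫ x, 1 / ∑ k, ψ k x ∂(πb i)) := by
  obtain rfl : πb = fun i => biasedMeasure π (ψ i) := funext hπb
  obtain rfl : z = fun i => (∫ x, ψ i x ∂π) / ∑ k, ∫ x, ψ k x ∂π := funext hz
  have hψ i : AEMeasurable (ψ i) π := (hψmeas i).aemeasurable
  have hsum x : ∑ k, ψ k x ≠ 0 := (hsumpos x).ne'
  have hS : 0 < ∑ k, ∫ x, ψ k x ∂π := by
    obtain ⟨x⟩ := nonempty_of_isProbabilityMeasure π
    obtain ⟨i, -, -⟩ := exists_ne_zero_of_sum_ne_zero (hsum x)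
    exact sum_pos (fun k _ => hψpos k) ⟨i, mem_univ i⟩
  have hone : Integrable (fun _ => (1 : ℝ)) π := integrable_const 1
  refine ⟨integrable_div_sum_biasedMeasure hψ hψnonneg hψpos hg,
    integrable_div_sum_biasedMeasure hψ hψnonneg hψpos hone, ?_⟩
  rw [sum_mul_integral_biasedMeasure_div_sum hψ hψnonneg hψpos hsum hg,
    sum_mul_integral_biasedMeasure_div_sum hψ hψnonneg hψpos hsum hone, integral_const,
    probReal_univ, one_smul, mul_one]
  exact (mul_div_cancel_left₀ _ (inv_ne_zero hS.ne')).symm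

/-- **EMUS combined-average identity.**
π is a probability measure, ψ i are nonnegative measurable bias functions with
0 < ∫ ψ i dπ < ∞ and ∑ k ψ k > 0 everywhere; π i are the biased distributions
and z i the normalization constants.  For any π-integrable g, the starred averages
are finite and ⟨g⟩ = (∑ i z i ⟨g*⟩ i)/(∑ i z i ⟨1*⟩ i). -/
theorem emus_combined_average_identity
    {X : Type*} [MeasurableSpace X] (π : Measure X) [IsProbabilityMeasure π]
    {L : ℕ} (ψ : Fin L → X → ℝ)
    (hψmeas : ∀ i, Measurable (ψ i)) (hψnonneg : ∀ i x, 0 ≤ ψ i x)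
    (hψint : ∀ i, Integrable (ψ i) π) (hψpos : ∀ i, 0 < ∫ x, ψ i x ∂π)
    (hsumpos : ∀ x, 0 < ∑ k, ψ k x)
    (πb : Fin L → Measure X)
    (hπb : ∀ i, πb i = (ENNReal.ofReal (∫ x, ψ i x ∂π))⁻¹ •
      π.withDensity fun x => ENNReal.ofReal (ψ i x))
    (z : Fin L → ℝ)
    (hz : ∀ i, z i = (∫ x, ψ i x ∂π) / ∑ k, ∫ x, ψ k x ∂π)
    (g : X → ℝ) (hg : Integrable g π) :
    (∀ i, Integrable (fun x => g x / ∑ k, ψ k x) (πb i)) ∧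
    (∀ i, Integrable (fun x => 1 / ∑ k, ψ k x) (πb i)) ∧
    ∫ x, g x ∂π =
      (∑ i, z i * ∫ x, g x / ∑ k, ψ k x ∂(πb i)) /
      (∑ i, z i * ∫ x, 1 / ∑ k, ψ k x ∂(πb i)) :=
  emus_combined_average_identity_general π ψ hψmeas hψnonneg hψpos hsumpos πb hπb z hz g hg
end

section
/- Well-posedness of each step of the MBAR/iterative-EMUS eigenproblem: In the setting where F̄_ij(w) = (1/N_i) Σ_{t=0}^{N_i−1} [ ψ_j(x_t^i) n_i / w_i ] / [ Σ_{k=1}^L ψ_k(x_t^i) n_k / w_k ] for positive vectors w, the following hold: (a) if F̄(w₀) is irreducible for one vector w₀ with positive entries, then F̄(w) is irreducible for every vector w with positive entries; (b) for every such w, there is exactly one vector z with zᵀ F̄(w) = zᵀ and Σ_{i=1}^L z_i = 1, and this z has all entries positive. -/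
open Finset Matrix

section Stationary

variable {ι : Type*} [Fintype ι]

theorem eq_of_le_of_dotProduct_eq {u u' v : ι → ℝ} (hle : u ≤ u') (hv : ∀ i, 0 < v i)
    (h : u ⬝ᵥ v = u' ⬝ᵥ v) : u = u' := by
  have hsum : ∑ i, (u' i - u i) * v i = 0 := by
    simpa only [sub_mul, sum_sub_distrib, dotProduct, sub_eq_zero] using h.symm
  funext i
  have hi := (sum_eq_zero_iff_of_nonneg fun i _ =>
    mul_nonneg (sub_nonneg.2 (hle i)) (hv i).le).1 hsum i (mem_univ i)
  have := (mul_eq_zero.1 hi).resolve_right (hv i).ne'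
  linarith

theorem abs_vecMul_eq_self_of_mulVec_eq_self {F : Matrix ι ι ℝ} (hF : ∀ i j, 0 ≤ F i j)
    {v : ι → ℝ} (hv : ∀ i, 0 < v i) (hFv : F *ᵥ v = v) {z : ι → ℝ} (hz : z ᵥ* F = z) :
    |z| ᵥ* F = |z| := by
  have hle : |z| ≤ |z| ᵥ* F := fun j =>
    calc |z| j = |∑ i, z i * F i j| := congrArg abs (congrFun hz j).symm
      _ ≤ ∑ i, |z i * F i j| := abs_sum_le_sum_abs _ _
      _ = (|z| ᵥ* F) j := by simp [vecMul, dotProduct, abs_mul, abs_of_nonneg (hF _ _)]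
  refine (eq_of_le_of_dotProduct_eq hle hv ?_).symm
  rw [← dotProduct_mulVec, hFv]

theorem exists_vecMul_eq_self_of_mulVec_eq_self {K : Type*} [Field K] [DecidableEq ι]
    {F : Matrix ι ι K} {v : ι → K} (hv : v ≠ 0) (hFv : F *ᵥ v = v) :
    ∃ z ≠ 0, z ᵥ* F = z := by
  have hdet : (F - 1).det = 0 :=
    exists_mulVec_eq_zero_iff.1 ⟨v, hv, by rw [sub_mulVec, hFv, one_mulVec, sub_self]⟩
  obtain ⟨z, hz, hz0⟩ := exists_vecMul_eq_zero_iff.2 hdet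
  exact ⟨z, hz, by rwa [vecMul_sub, vecMul_one, sub_eq_zero] at hz0⟩

end Stationary

namespace MatIrreducible

variable {L : ℕ} {F : Matrix (Fin L) (Fin L) ℝ}

theorem mono {G : Matrix (Fin L) (Fin L) ℝ} (hF : MatIrreducible F)
    (h : ∀ i j, F i j ≠ 0 → G i j ≠ 0) : MatIrreducible G := fun A hA hAc => by
  obtain ⟨i, hi, j, hj, hij⟩ := hF A hA hAc
  exact ⟨i, hi, j, hj, h i j hij⟩

/-- No mass of `z` can flow out of its support, so the support is closed under `F` and, by
irreducibility, is everything. -/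
theorem pos_of_vecMul_eq_self_of_nonneg (hirr : MatIrreducible F) (hF : ∀ i j, 0 ≤ F i j)
    {z : Fin L → ℝ} (hz : z ᵥ* F = z) (hz0 : 0 ≤ z) (hne : z ≠ 0) (i : Fin L) : 0 < z i := by
  classical
  by_contra! hi
  obtain ⟨k, hk⟩ := Function.ne_iff.1 hne
  obtain ⟨a, ha, b, hb, hab⟩ := hirr {k | z k ≠ 0} ⟨k, by simpa using hk⟩
    ⟨i, by simpa using le_antisymm hi (hz0 i)⟩
  have hzb : ∑ k, z k * F k b = 0 := by
    simpa [vecMul, dotProduct] using (congrFun hz b).trans (by simpa using hb)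
  have := (sum_eq_zero_iff_of_nonneg fun k _ => mul_nonneg (hz0 k) (hF k b)).1 hzb a (mem_univ a)
  exact mul_ne_zero (by simpa using ha) hab this

variable {v : Fin L → ℝ}

theorem pos_or_neg_of_vecMul_eq_self (hirr : MatIrreducible F) (hF : ∀ i j, 0 ≤ F i j)
    (hv : ∀ i, 0 < v i) (hFv : F *ᵥ v = v) {z : Fin L → ℝ} (hz : z ᵥ* F = z) (hne : z ≠ 0) :
    (∀ i, 0 < z i) ∨ (∀ i, z i < 0) := by
  by_cases hzabs : |z| = z
  · exact .inl (hirr.pos_of_vecMul_eq_self_of_nonneg hF hz (hzabs ▸ abs_nonneg z) hne)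
  · have hpos := hirr.pos_of_vecMul_eq_self_of_nonneg hF (z := |z| - z)
      (by rw [sub_vecMul, abs_vecMul_eq_self_of_mulVec_eq_self hF hv hFv hz, hz])
      (sub_nonneg.2 (le_abs_self z)) (sub_ne_zero.2 hzabs)
    refine .inr fun i => ?_
    have hi : z i < |z i| := by simpa using hpos i
    rcases lt_abs.1 hi with h | h <;> linarith

theorem sum_ne_zero_of_vecMul_eq_self (hirr : MatIrreducible F) (hF : ∀ i j, 0 ≤ F i j)
    (hv : ∀ i, 0 < v i) (hFv : F *ᵥ v = v) {z : Fin L → ℝ} (hz : z ᵥ* F = z) (hne : z ≠ 0) :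
    ∑ i, z i ≠ 0 := by
  obtain ⟨k, -⟩ := Function.ne_iff.1 hne
  rcases hirr.pos_or_neg_of_vecMul_eq_self hF hv hFv hz hne with h | h
  · exact (sum_pos (fun i _ => h i) ⟨k, mem_univ k⟩).ne'
  · exact (sum_neg (fun i _ => h i) ⟨k, mem_univ k⟩).ne

theorem pos_of_vecMul_eq_self_of_sum_eq_one (hirr : MatIrreducible F) (hF : ∀ i j, 0 ≤ F i j)
    (hv : ∀ i, 0 < v i) (hFv : F *ᵥ v = v) {z : Fin L → ℝ} (hz : z ᵥ* F = z)
    (hz1 : ∑ i, z i = 1) (i : Fin L) : 0 < z i := by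
  have hne : z ≠ 0 := by rintro rfl; simp at hz1
  rcases hirr.pos_or_neg_of_vecMul_eq_self hF hv hFv hz hne with h | h
  · exact h i
  · linarith [sum_neg (fun i _ => h i) ⟨i, mem_univ i⟩]

theorem existsUnique_vecMul_eq_self_of_sum_eq_one (hL : 0 < L) (hirr : MatIrreducible F)
    (hF : ∀ i j, 0 ≤ F i j) (hv : ∀ i, 0 < v i) (hFv : F *ᵥ v = v) :
    ∃! z : Fin L → ℝ, z ᵥ* F = z ∧ ∑ i, z i = 1 := by
  have hv0 : v ≠ 0 := fun h => (hv ⟨0, hL⟩).ne' (congrFun h _)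
  obtain ⟨z, hz0, hz⟩ := exists_vecMul_eq_self_of_mulVec_eq_self hv0 hFv
  have hsum := hirr.sum_ne_zero_of_vecMul_eq_self hF hv hFv hz hz0
  refine ⟨(∑ i, z i)⁻¹ • z, ⟨by rw [smul_vecMul, hz], by simp [← mul_sum, hsum]⟩, ?_⟩
  rintro y ⟨hy, hy1⟩
  by_contra hne
  refine hirr.sum_ne_zero_of_vecMul_eq_self hF hv hFv (z := y - (∑ i, z i)⁻¹ • z)
    (by rw [sub_vecMul, hy, smul_vecMul, hz]) (sub_ne_zero.2 hne) ?_
  simp [sum_sub_distrib, hy1, ← mul_sum, hsum]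

end MatIrreducible

section MBAR

variable {X : Type*} {L : ℕ} (ψ : Fin L → X → ℝ) (n : Fin L → ℝ) {N : Fin L → ℕ}
  (xs : (i : Fin L) → Fin (N i) → X)

noncomputable def mbarDenom (w : Fin L → ℝ) (x : X) : ℝ := ∑ k, ψ k x * n k / w k

noncomputable def mbarMatrix (w : Fin L → ℝ) : Matrix (Fin L) (Fin L) ℝ :=
  Matrix.of fun i j =>
    (1 / (N i : ℝ)) * ∑ t, ψ j (xs i t) * n i / w i / mbarDenom ψ n w (xs i t)

variable {ψ n xs} {w : Fin L → ℝ}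

theorem mbar_summand_nonneg (hψ : ∀ k x, 0 ≤ ψ k x) (hn : ∀ k, 0 < n k) (hw : ∀ k, 0 < w k)
    (j k : Fin L) (x : X) : 0 ≤ ψ j x * n k / w k :=
  div_nonneg (mul_nonneg (hψ j x) (hn k).le) (hw k).le

theorem mbarDenom_pos (hψ : ∀ k x, 0 ≤ ψ k x) (hsum : ∀ x, 0 < ∑ k, ψ k x)
    (hn : ∀ k, 0 < n k) (hw : ∀ k, 0 < w k) (x : X) : 0 < mbarDenom ψ n w x := by
  obtain ⟨k, -, hk⟩ := exists_lt_of_sum_lt (by simpa using hsum x : ∑ _k : Fin L, (0 : ℝ) < _)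
  exact sum_pos' (fun k _ => mbar_summand_nonneg hψ hn hw k k x)
    ⟨k, mem_univ k, div_pos (mul_pos hk (hn k)) (hw k)⟩

theorem mbarMatrix_nonneg (hψ : ∀ k x, 0 ≤ ψ k x) (hn : ∀ k, 0 < n k) (hw : ∀ k, 0 < w k)
    (i j : Fin L) : 0 ≤ mbarMatrix ψ n xs w i j := by
  have hD (x : X) : 0 ≤ mbarDenom ψ n w x :=
    sum_nonneg fun k _ => mbar_summand_nonneg hψ hn hw k k x
  exact mul_nonneg (by positivity)
    (sum_nonneg fun t _ => div_nonneg (mbar_summand_nonneg hψ hn hw j i _) (hD _))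

theorem mbarMatrix_apply_eq_zero {i j : Fin L} (h : ∀ t, ψ j (xs i t) = 0) :
    mbarMatrix ψ n xs w i j = 0 := by
  simp [mbarMatrix, h]

theorem mbarMatrix_apply_pos (hψ : ∀ k x, 0 ≤ ψ k x) (hn : ∀ k, 0 < n k) (hw : ∀ k, 0 < w k)
    (hD : ∀ x, 0 < mbarDenom ψ n w x) {i j : Fin L} {t : Fin (N i)} (ht : ψ j (xs i t) ≠ 0) :
    0 < mbarMatrix ψ n xs w i j := by
  have hNi : (0 : ℝ) < N i := Nat.cast_pos.2 t.pos
  have hterm : 0 < ψ j (xs i t) * n i / w i / mbarDenom ψ n w (xs i t) :=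
    div_pos (div_pos (mul_pos ((hψ j _).lt_of_ne' ht) (hn i)) (hw i)) (hD _)
  exact mul_pos (by positivity) (sum_pos'
    (fun s _ => div_nonneg (mbar_summand_nonneg hψ hn hw j i _) (hD _).le) ⟨t, mem_univ t, hterm⟩)

theorem MatIrreducible.mbarMatrix {w₀ : Fin L → ℝ} (h₀ : MatIrreducible (mbarMatrix ψ n xs w₀))
    (hψ : ∀ k x, 0 ≤ ψ k x) (hsum : ∀ x, 0 < ∑ k, ψ k x) (hn : ∀ k, 0 < n k) (hw : ∀ k, 0 < w k) :
    MatIrreducible (mbarMatrix ψ n xs w) :=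
  h₀.mono fun i j hij => by
    obtain ⟨t, ht⟩ : ∃ t, ψ j (xs i t) ≠ 0 := by
      contrapose! hij
      exact mbarMatrix_apply_eq_zero hij
    exact (mbarMatrix_apply_pos hψ hn hw (mbarDenom_pos hψ hsum hn hw) ht).ne'

theorem mbarMatrix_mulVec (hN : ∀ i, N i ≠ 0) (hD : ∀ x, mbarDenom ψ n w x ≠ 0) :
    mbarMatrix ψ n xs w *ᵥ (fun j => n j / w j) = fun j => n j / w j := by
  funext i
  have hrow (x : X) : ∑ j, ψ j x * n i / w i / mbarDenom ψ n w x * (n j / w j) = n i / w i := by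
    calc _ = n i / w i * (mbarDenom ψ n w x / mbarDenom ψ n w x) := by
          simp only [mbarDenom, sum_div, mul_sum]
          exact sum_congr rfl fun j _ => by ring
      _ = n i / w i := by rw [div_self (hD x), mul_one]
  simp only [mulVec, dotProduct, mbarMatrix, of_apply, mul_assoc, ← mul_sum, sum_mul]
  rw [sum_comm]
  simp only [hrow, sum_const, card_univ, Fintype.card_fin, nsmul_eq_mul]
  field_simp [hN i]

end MBAR

theorem mbar_iteration_eigenproblem_wellposed_general
    {X : Type*} {L : ℕ} (hL : 0 < L)
    (ψ : Fin L → X → ℝ) (hψnonneg : ∀ i x, 0 ≤ ψ i x)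
    (hsumpos : ∀ x, 0 < ∑ k, ψ k x)
    (Nn : Fin L → ℕ) (hNn : ∀ i, 0 < Nn i)
    (xs : (i : Fin L) → Fin (Nn i) → X)
    (n : Fin L → ℝ) (hn : ∀ i, 0 < n i)
    (Fbar : (Fin L → ℝ) → Matrix (Fin L) (Fin L) ℝ)
    (hFbar : ∀ w i j, Fbar w i j = (1 / (Nn i : ℝ)) * ∑ t : Fin (Nn i),
      (ψ j (xs i t) * n i / w i) / ∑ k, ψ k (xs i t) * n k / w k)
    (w₀ : Fin L → ℝ)
    (hirr₀ : MatIrreducible (Fbar w₀)) :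
    ∀ w : Fin L → ℝ, (∀ i, 0 < w i) →
      MatIrreducible (Fbar w) ∧
      (∃! z : Fin L → ℝ, Matrix.vecMul z (Fbar w) = z ∧ ∑ i, z i = 1) ∧
      (∀ z : Fin L → ℝ, Matrix.vecMul z (Fbar w) = z → ∑ i, z i = 1 → ∀ i, 0 < z i) := by
  have hF (w : Fin L → ℝ) : Fbar w = mbarMatrix ψ n xs w := Matrix.ext (hFbar w)
  intro w hw
  rw [hF] at hirr₀ ⊢
  have hirr := hirr₀.mbarMatrix hψnonneg hsumpos hn hw
  have hnonneg := mbarMatrix_nonneg (xs := xs) hψnonneg hn hw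
  have hv (i : Fin L) : 0 < n i / w i := div_pos (hn i) (hw i)
  have hFv := mbarMatrix_mulVec (xs := xs) (fun i => (hNn i).ne')
    fun x => (mbarDenom_pos hψnonneg hsumpos hn hw x).ne'
  exact ⟨hirr, hirr.existsUnique_vecMul_eq_self_of_sum_eq_one hL hnonneg hv hFv,
    fun z hz hz1 => hirr.pos_of_vecMul_eq_self_of_sum_eq_one hnonneg hv hFv hz hz1⟩

/-- **Well-posedness of each step of the MBAR/iterative-EMUS eigenproblem:**
(a) if F̄(w₀) is irreducible for one positive w₀, then F̄(w) is irreducible for every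
positive w; (b) for every such w there is exactly one z with zᵀ F̄(w) = zᵀ and
∑ z i = 1, and this z has positive entries. -/
theorem mbar_iteration_eigenproblem_wellposed
    {X : Type*} {L : ℕ} (hL : 0 < L)
    (ψ : Fin L → X → ℝ) (hψnonneg : ∀ i x, 0 ≤ ψ i x)
    (hsumpos : ∀ x, 0 < ∑ k, ψ k x)
    (Nn : Fin L → ℕ) (hNn : ∀ i, 0 < Nn i)
    (xs : (i : Fin L) → Fin (Nn i) → X)
    (n : Fin L → ℝ) (hn : ∀ i, 0 < n i)
    (Fbar : (Fin L → ℝ) → Matrix (Fin L) (Fin L) ℝ)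
    (hFbar : ∀ w i j, Fbar w i j = (1 / (Nn i : ℝ)) * ∑ t : Fin (Nn i),
      (ψ j (xs i t) * n i / w i) / ∑ k, ψ k (xs i t) * n k / w k)
    (w₀ : Fin L → ℝ) (hw₀ : ∀ i, 0 < w₀ i)
    (hirr₀ : MatIrreducible (Fbar w₀)) :
    ∀ w : Fin L → ℝ, (∀ i, 0 < w i) →
      MatIrreducible (Fbar w) ∧
      (∃! z : Fin L → ℝ, Matrix.vecMul z (Fbar w) = z ∧ ∑ i, z i = 1) ∧
      (∀ z : Fin L → ℝ, Matrix.vecMul z (Fbar w) = z → ∑ i, z i = 1 → ∀ i, 0 < z i) :=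
  mbar_iteration_eigenproblem_wellposed_general hL ψ hψnonneg hsumpos Nn hNn xs n hn Fbar hFbar w₀
    hirr₀
end

section
/- Low-temperature variance bound for umbrella sampling: Let k_BT > 0, K > 0, Ω > 0, γ > 0, W'_max > 0, N_min > 0 be constants. Let L ≥ 1, N > 0 with N_i = N/L ≥ N_min for each i, and let ΔW_1, …, ΔW_L ≥ 0 satisfy ΔW_i ≤ W'_max γ / L. Assume L = W'_max/(Ω k_BT). Let Y_1, …, Y_L be independent real-valued square-integrable random variables with Var(Y_i) ≤ (K/(k_BT · N_i · L²)) exp(ΔW_i/(k_BT)) for every i. Then ΔGˉ = k_BT Σ_{i=1}^L s_i Y_i, for any signs s_i ∈ {−1, +1}, satisfies Var(ΔGˉ) ≤ K W'_max exp(Ωγ)/(Ω N_min). In particular, the bound is independent of the temperature k_BT. -/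
open MeasureTheory ProbabilityTheory

/-! The variance of `k_BT ∑ sᵢ Yᵢ` is `k_BT² ∑ Var Yᵢ`. Since `ΔWᵢ ≤ W'_max γ / L = Ω γ k_BT`, each
Arrhenius factor is at most `exp (Ω γ)`, so the `L` windows contribute at most
`k_BT² · L · K e^{Ωγ} / (k_BT N_i L²) = K e^{Ωγ} k_BT / (N_i L)`. The choice `L k_BT = W'_max / Ω`
turns this into `K W'_max e^{Ωγ} / (Ω N_i L²)`, in which the temperature no longer appears. -/

lemma ProbabilityTheory.iIndepFun.variance_const_mul_sum_mul {Ω ι : Type*} [MeasurableSpace Ω]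
    {μ : Measure Ω} [Fintype ι] {Y : ι → Ω → ℝ} (hY : ∀ i, MemLp (Y i) 2 μ) (hindep : iIndepFun Y μ)
    (c : ℝ) (a : ι → ℝ) :
    variance (fun ω => c * ∑ i, a i * Y i ω) μ = c ^ 2 * ∑ i, a i ^ 2 * variance (Y i) μ := by
  have hsum : (fun ω => c * ∑ i, a i * Y i ω) = fun ω => c * (∑ i, fun ω => a i * Y i ω) ω := by
    simp only [Finset.sum_apply]
  have hpair : Set.Pairwise ↑(Finset.univ : Finset ι)
      fun i j => IndepFun (fun ω => a i * Y i ω) (fun ω => a j * Y j ω) μ :=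
    fun i _ j _ hij =>
      (hindep.indepFun hij).comp (measurable_const_mul (a i)) (measurable_const_mul (a j))
  rw [hsum, variance_const_mul,
    IndepFun.variance_sum (fun i _ => (hY i).const_mul (a i)) hpair]
  simp only [variance_const_mul]

lemma sq_mul_sum_window_bound_le {L : ℕ} {kBT K Om Wmax Ni Nmin : ℝ} (hkBT : 0 < kBT)
    (hK : 0 ≤ K) (hOm : Om ≠ 0) (hNmin : 0 < Nmin) (hNi : Nmin ≤ Ni)
    (hWmax : Wmax = Om * kBT * L) (e : ℝ) (he : 0 ≤ e) :
    kBT ^ 2 * ∑ _i : Fin L, K / (kBT * Ni * L ^ 2) * e ≤ K * Wmax * e / (Om * Nmin) := by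
  obtain rfl | hL := L.eq_zero_or_pos
  · simp [hWmax]
  have hL1 : (1 : ℝ) ≤ L := by exact_mod_cast hL
  have hNi_pos : 0 < Ni := hNmin.trans_le hNi
  rw [Finset.sum_const, Finset.card_univ, Fintype.card_fin, nsmul_eq_mul, hWmax]
  calc kBT ^ 2 * (L * (K / (kBT * Ni * L ^ 2) * e)) = K * e * kBT / (Ni * L) := by
        field_simp
    _ ≤ K * e * kBT / Nmin := by
        gcongr
        nlinarith
    _ ≤ K * (Om * kBT * L) * e / (Om * Nmin) := by
        rw [show K * (Om * kBT * L) * e / (Om * Nmin) = K * e * kBT / Nmin * L by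
          field_simp]
        exact le_mul_of_one_le_right (by positivity) hL1

theorem umbrella_low_temperature_variance_bound_general
    {Ω' : Type*} [MeasurableSpace Ω'] (P : Measure Ω')
    (kBT K Om γ Wmax Nmin : ℝ)
    (hkBT : 0 < kBT) (hK : 0 < K) (hOm : 0 < Om) (hNmin : 0 < Nmin)
    {L : ℕ}
    (Ni : ℝ) (hNimin : Nmin ≤ Ni)
    (ΔW : Fin L → ℝ)
    (hΔW : ∀ i, ΔW i ≤ Wmax * γ / L)
    (hLeq : (L : ℝ) = Wmax / (Om * kBT))
    (Y : Fin L → Ω' → ℝ)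
    (hsq : ∀ i, MemLp (Y i) 2 P)
    (hindep : iIndepFun Y P)
    (hvar : ∀ i, variance (Y i) P ≤ K / (kBT * Ni * L ^ 2) * Real.exp (ΔW i / kBT))
    (s : Fin L → ℝ) (hs : ∀ i, s i = 1 ∨ s i = -1) :
    variance (fun ω => kBT * ∑ i, s i * Y i ω) P ≤
      K * Wmax * Real.exp (Om * γ) / (Om * Nmin) := by
  have hWmax_eq : Wmax = Om * kBT * L := by
    rw [hLeq]; field_simp
  have hNi_pos : 0 < Ni := hNmin.trans_le hNimin
  have hs_sq : ∀ i, s i ^ 2 = 1 := fun i => by rcases hs i with h | h <;> simp [h]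
  have harrhenius (i : Fin L) : Real.exp (ΔW i / kBT) ≤ Real.exp (Om * γ) := by
    have hL : (L : ℝ) ≠ 0 := by exact_mod_cast i.pos.ne'
    refine Real.exp_le_exp.2 ((div_le_iff₀ hkBT).2 ((hΔW i).trans_eq ?_))
    rw [hWmax_eq]; field_simp
  rw [hindep.variance_const_mul_sum_mul hsq]
  simp only [hs_sq, one_mul]
  calc kBT ^ 2 * ∑ i, variance (Y i) P
      ≤ kBT ^ 2 * ∑ _i : Fin L, K / (kBT * Ni * L ^ 2) * Real.exp (Om * γ) := by
        gcongr with i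
        exact (hvar i).trans (mul_le_mul_of_nonneg_left (harrhenius i) (by positivity))
    _ ≤ K * Wmax * Real.exp (Om * γ) / (Om * Nmin) :=
        sq_mul_sum_window_bound_le hkBT hK.le hOm.ne' hNmin hNimin hWmax_eq _ (Real.exp_pos _).le

/-- **Low-temperature variance bound for umbrella sampling:** with L = W'_max/(Ω k_BT)
windows, per-window free-energy variations ΔW i ≤ W'_max γ/L, and Arrhenius-type
per-window variance bounds Var(Y i) ≤ (K/(k_BT N_i L²)) exp(ΔW i/k_BT), any signed sum
ΔḠ = k_BT ∑ i s i Y i of the independent window variables satisfies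
Var(ΔḠ) ≤ K W'_max exp(Ωγ)/(Ω N_min), a bound independent of the temperature. -/
theorem umbrella_low_temperature_variance_bound
    {Ω' : Type*} [MeasurableSpace Ω'] (P : Measure Ω') [IsProbabilityMeasure P]
    (kBT K Om γ Wmax Nmin : ℝ)
    (hkBT : 0 < kBT) (hK : 0 < K) (hOm : 0 < Om) (hγ : 0 < γ)
    (hWmax : 0 < Wmax) (hNmin : 0 < Nmin)
    {L : ℕ} (hL : 1 ≤ L)
    (N : ℝ) (hN : 0 < N) (Ni : ℝ) (hNi : Ni = N / L) (hNimin : Nmin ≤ Ni)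
    (ΔW : Fin L → ℝ) (hΔWnonneg : ∀ i, 0 ≤ ΔW i)
    (hΔW : ∀ i, ΔW i ≤ Wmax * γ / L)
    (hLeq : (L : ℝ) = Wmax / (Om * kBT))
    (Y : Fin L → Ω' → ℝ)
    (hmeas : ∀ i, Measurable (Y i))
    (hsq : ∀ i, MemLp (Y i) 2 P)
    (hindep : iIndepFun Y P)
    (hvar : ∀ i, variance (Y i) P ≤ K / (kBT * Ni * L ^ 2) * Real.exp (ΔW i / kBT))
    (s : Fin L → ℝ) (hs : ∀ i, s i = 1 ∨ s i = -1) :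
    variance (fun ω => kBT * ∑ i, s i * Y i ω) P ≤
      K * Wmax * Real.exp (Om * γ) / (Om * Nmin) :=
  umbrella_low_temperature_variance_bound_general P kBT K Om γ Wmax Nmin hkBT hK hOm hNmin Ni hNimin
    ΔW hΔW hLeq Y hsq hindep hvar s hs
end

section
/- Derivative of the invariant vector of a stochastic matrix (Golub–Meyer identity): Let F ∈ ℝ^{L×L} be an irreducible row-stochastic matrix with unique probability left invariant vector z(F). Then I − F has a group inverse (I − F)^#, and for every matrix E ∈ ℝ^{L×L} whose rows each sum to zero and such that F + εE is row-stochastic for all sufficiently small ε > 0, the map ε ↦ z(F + εE) is differentiable at ε = 0 with (d/dε)|_{ε=0} z_k(F + εE) = z(F)ᵀ E (I − F)^# e_k = Σ_{i,j=1}^L z_i(F) E_{ij} (I − F)^#_{jk}; equivalently, ∂z_k/∂F_ij = z_i(F) (I − F)^#_{jk}. -/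
open Filter

/-!
Write `W = 1 zᵀ` for the rank-one projector built from `z = z(F)`. By the maximum principle the
kernel of `I - F` consists of the constant vectors, and `zᵀ 1 = 1`, so `A = I - F + W` is
invertible and `(I - F)^# = A⁻¹ - W`. For a perturbation `J = F + εE` that is still irreducible
and stochastic, `z(J)ᵀ (I - J + W) = zᵀ`, i.e. `z(J)ᵀ = zᵀ (A - εE)⁻¹`. Differentiating the
inverse gives `zᵀ A⁻¹ E A⁻¹ = zᵀ E A⁻¹`, and `zᵀ E W = 0` because the rows of `E` sum to zero.
-/

open Matrix Topology

section

variable {n α : Type*} [Fintype n]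

theorem vecMul_replicateRow [NonUnitalCommSemiring α] (v z : n → α) :
    v ᵥ* replicateRow n z = (∑ i, v i) • z := by
  ext j
  simp [vecMul, dotProduct, replicateRow_apply, Finset.sum_mul]

theorem vecMul_one_sub_add_replicateRow [DecidableEq n] [CommRing α] {J : Matrix n n α}
    {y : n → α} (hy : y ᵥ* J = y) (hy1 : ∑ i, y i = 1) (w : n → α) :
    y ᵥ* (1 - J + replicateRow n w) = w := by
  rw [vecMul_add, vecMul_sub, vecMul_one, hy, sub_self, zero_add, vecMul_replicateRow, hy1,
    one_smul]

theorem eq_vecMul_nonsing_inv_of_vecMul_eq [DecidableEq n] [CommRing α] {A : Matrix n n α}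
    (hA : IsUnit A.det) {y w : n → α} (hyw : y ᵥ* A = w) : y = w ᵥ* A⁻¹ := by
  rw [← hyw, vecMul_vecMul, mul_nonsing_inv A hA, vecMul_one]

theorem vecMul_nonsing_inv_mul_mul_nonsing_inv_apply [DecidableEq n] [CommRing α]
    {A : Matrix n n α} (hA : IsUnit A.det) {z : n → α} (hzA : z ᵥ* A = z)
    {E : Matrix n n α} (hE : ∀ i, ∑ j, E i j = 0) (w : n → α) (k : n) :
    (z ᵥ* (A⁻¹ * E * A⁻¹)) k = ∑ i, ∑ j, z i * E i j * (A⁻¹ - replicateRow n w) j k := by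
  have hzA' : z ᵥ* A⁻¹ = z := (eq_vecMul_nonsing_inv_of_vecMul_eq hA hzA).symm
  have hzEW : z ᵥ* E ᵥ* replicateRow n w = 0 := by
    have hsum : ∑ j, (z ᵥ* E) j = 0 := by
      simp only [vecMul, dotProduct]
      rw [Finset.sum_comm]
      simp [← Finset.mul_sum, hE]
    rw [vecMul_replicateRow, hsum, zero_smul]
  calc (z ᵥ* (A⁻¹ * E * A⁻¹)) k = (z ᵥ* E ᵥ* (A⁻¹ - replicateRow n w)) k := by
        rw [vecMul_sub, hzEW, sub_zero, ← vecMul_vecMul, ← vecMul_vecMul, hzA']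
    _ = ∑ i, ∑ j, z i * E i j * (A⁻¹ - replicateRow n w) j k := by
        simp only [vecMul, dotProduct, Finset.sum_mul]
        exact Finset.sum_comm

end

theorem hasDerivAt_ringInverse_sub_smul {𝕜 R : Type*} [NontriviallyNormedField 𝕜] [NormedRing R]
    [HasSummableGeomSeries R] [NormedAlgebra 𝕜 R] (u : Rˣ) (e : R) :
    HasDerivAt (fun t : 𝕜 => Ring.inverse (↑u - t • e)) (↑u⁻¹ * e * ↑u⁻¹) 0 := by
  have hpath : HasDerivAt (fun t : 𝕜 => (u : R) - t • e) (-e) 0 := by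
    simpa using ((hasDerivAt_id (0 : 𝕜)).smul_const e).const_sub (u : R)
  have h := (hasFDerivAt_ringInverse (𝕜 := 𝕜) u).comp_hasDerivAt_of_eq 0 hpath (by simp)
  have hd : (-ContinuousLinearMap.mulLeftRight 𝕜 R ↑u⁻¹ ↑u⁻¹) (-e) = ↑u⁻¹ * e * ↑u⁻¹ := by simp
  rwa [hd] at h

theorem hasDerivAt_vecMul_nonsing_inv_sub_smul {n : Type*} [Fintype n] [DecidableEq n]
    {A : Matrix n n ℝ} (hA : IsUnit A.det) (E : Matrix n n ℝ) (z : n → ℝ) (k : n) :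
    HasDerivAt (fun t : ℝ => (z ᵥ* (A - t • E)⁻¹) k) ((z ᵥ* (A⁻¹ * E * A⁻¹)) k) 0 := by
  -- any norm will do; the `ℓ∞` operator norm makes the matrices a normed algebra
  let := Matrix.linftyOpNormedRing (n := n) (α := ℝ)
  let := Matrix.linftyOpNormedAlgebra (n := n) (R := ℝ) (α := ℝ)
  obtain ⟨u, rfl⟩ := A.isUnit_iff_isUnit_det.2 hA
  let φ : Matrix n n ℝ →L[ℝ] ℝ :=
    LinearMap.toContinuousLinearMap (LinearMap.proj k ∘ₗ vecMulBilin ℝ ℝ z)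
  simp only [nonsing_inv_eq_ringInverse, Ring.inverse_unit]
  exact φ.hasFDerivAt.comp_hasDerivAt (0 : ℝ) (hasDerivAt_ringInverse_sub_smul u E)

variable {L : ℕ}

theorem RowStochastic.eq_of_mulVec_apply_eq_of_le {F : Matrix (Fin L) (Fin L) ℝ}
    (hF : RowStochastic F) {x : Fin L → ℝ} {m : ℝ} (hle : ∀ j, x j ≤ m) {i j : Fin L}
    (hi : (F *ᵥ x) i = m) (hij : F i j ≠ 0) : x j = m := by
  by_contra hne
  have hlt : ∑ k, F i k * x k < ∑ k, F i k * m :=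
    Finset.sum_lt_sum (fun k _ => mul_le_mul_of_nonneg_left (hle k) (hF.1 i k))
      ⟨j, Finset.mem_univ j,
        mul_lt_mul_of_pos_left (lt_of_le_of_ne (hle j) hne) ((hF.1 i j).lt_of_ne' hij)⟩
  rw [← Finset.sum_mul, hF.2 i, one_mul] at hlt
  exact hlt.ne hi

theorem MatIrreducible.eq_of_mulVec_eq_self {F : Matrix (Fin L) (Fin L) ℝ}
    (hirr : MatIrreducible F) (hF : RowStochastic F) {x : Fin L → ℝ} (hx : F *ᵥ x = x)
    (i j : Fin L) : x i = x j := by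
  obtain ⟨a, -, ha⟩ := Finset.exists_max_image Finset.univ x ⟨i, Finset.mem_univ i⟩
  let B := Finset.univ.filter fun b => x b = x a
  suffices hB : Bᶜ = ∅ by
    have hall : ∀ b, x b = x a := fun b => by
      simpa [B] using Finset.eq_empty_iff_forall_notMem.1 hB b
    rw [hall i, hall j]
  by_contra hne
  obtain ⟨b, hb, c, hc, hbc⟩ :=
    hirr B ⟨a, by simp [B]⟩ (Finset.nonempty_iff_ne_empty.2 hne)
  have hb' : x b = x a := by simpa [B] using hb
  have hc' : x c ≠ x a := by simpa [B] using hc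
  exact hc' (hF.eq_of_mulVec_apply_eq_of_le (fun k => ha k (Finset.mem_univ k))
    (by rw [hx, hb']) hbc)

theorem MatIrreducible.eventually_add_smul {F : Matrix (Fin L) (Fin L) ℝ}
    (hirr : MatIrreducible F) (E : Matrix (Fin L) (Fin L) ℝ) :
    ∀ᶠ ε in 𝓝 (0 : ℝ), MatIrreducible (F + ε • E) := by
  have hsupp : ∀ᶠ ε in 𝓝 (0 : ℝ), ∀ i j, F i j ≠ 0 → F i j + ε * E i j ≠ 0 := by
    simp only [eventually_all]
    intro i j hij
    have hc : ContinuousAt (fun ε : ℝ => F i j + ε * E i j) 0 := by fun_prop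
    exact hc.eventually_ne (by simpa using hij)
  filter_upwards [hsupp] with ε hε B hB hBc
  obtain ⟨i, hi, j, hj, hij⟩ := hirr B hB hBc
  exact ⟨i, hi, j, hj, by simpa using hε i j hij⟩

theorem RowStochastic.mul_replicateRow {F : Matrix (Fin L) (Fin L) ℝ} (hF : RowStochastic F)
    (z : Fin L → ℝ) : F * replicateRow (Fin L) z = replicateRow (Fin L) z := by
  ext i j
  simp [mul_apply, replicateRow_apply, ← Finset.sum_mul, hF.2 i]

theorem isUnit_det_one_sub_add_replicateRow {J : Matrix (Fin L) (Fin L) ℝ}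
    (hirr : MatIrreducible J) (hJ : RowStochastic J) {y : Fin L → ℝ} (hy : y ᵥ* J = y)
    (hy1 : ∑ i, y i = 1) {w : Fin L → ℝ} (hw : ∑ i, w i ≠ 0) :
    IsUnit (1 - J + replicateRow (Fin L) w).det := by
  rw [isUnit_iff_ne_zero]
  intro hdet
  obtain ⟨v, hv0, hv⟩ := exists_mulVec_eq_zero_iff.2 hdet
  -- `y` turns the equation `(1 - J + 1 wᵀ) v = 0` into `w ⬝ᵥ v = 0`
  have hwv : w ⬝ᵥ v = 0 := by
    rw [← vecMul_one_sub_add_replicateRow hy hy1 w, ← dotProduct_mulVec, hv, dotProduct_zero]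
  have hfix : J *ᵥ v = v := by
    rw [add_mulVec, sub_mulVec, one_mulVec, replicateRow_mulVec_eq_const, hwv] at hv
    exact (sub_eq_zero.1 (by simpa using hv)).symm
  have hconst := hirr.eq_of_mulVec_eq_self hJ hfix
  refine hv0 (funext fun i => ?_)
  have hwv_const : w ⬝ᵥ v = (∑ j, w j) * v i := by
    simp only [dotProduct, Finset.sum_mul, hconst _ i]
  exact (mul_eq_zero.1 (hwv_const ▸ hwv)).resolve_left hw

theorem isGroupInverse_nonsing_inv_add_sub {M W : Matrix (Fin L) (Fin L) ℝ}
    (hMW : M * W = 0) (hWM : W * M = 0) (hW : W * W = W) (hA : IsUnit (M + W).det) :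
    IsGroupInverse M ((M + W)⁻¹ - W) := by
  set A := M + W
  have hAW : A⁻¹ * W = W :=
    calc A⁻¹ * W = A⁻¹ * (A * W) := by rw [add_mul, hMW, hW, zero_add]
      _ = W := nonsing_inv_mul_cancel_left A W hA
  have hWA : W * A⁻¹ = W :=
    calc W * A⁻¹ = W * A * A⁻¹ := by rw [mul_add, hWM, hW, zero_add]
      _ = W := mul_nonsing_inv_cancel_right A W hA
  have hMA : M = A - W := (add_sub_cancel_right M W).symm
  have hMG : M * (A⁻¹ - W) = 1 - W := by
    rw [mul_sub, hMW, sub_zero, hMA, sub_mul, mul_nonsing_inv A hA, hWA]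
  have hGM : (A⁻¹ - W) * M = 1 - W := by
    rw [sub_mul, hWM, sub_zero, hMA, mul_sub, nonsing_inv_mul A hA, hAW]
  refine ⟨?_, ?_, hMG.trans hGM.symm⟩
  · rw [hMG, sub_mul, one_mul, hWM, sub_zero]
  · rw [hGM, sub_mul, one_mul, mul_sub, hWA, hW, sub_self, sub_zero]

theorem isGroupInverse_one_sub_of_stationary {F : Matrix (Fin L) (Fin L) ℝ}
    (hF : RowStochastic F) {z : Fin L → ℝ} (hz : z ᵥ* F = z) (hz1 : ∑ i, z i = 1)
    (hA : IsUnit (1 - F + replicateRow (Fin L) z).det) :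
    IsGroupInverse (1 - F) ((1 - F + replicateRow (Fin L) z)⁻¹ - replicateRow (Fin L) z) := by
  have hWF : replicateRow (Fin L) z * F = replicateRow (Fin L) z := by
    rw [← replicateRow_vecMul, hz]
  have hWW : replicateRow (Fin L) z * replicateRow (Fin L) z = replicateRow (Fin L) z := by
    rw [← replicateRow_vecMul, vecMul_replicateRow, hz1, one_smul]
  refine isGroupInverse_nonsing_inv_add_sub ?_ ?_ hWW hA
  · rw [sub_mul, one_mul, hF.mul_replicateRow, sub_self]
  · rw [mul_sub, mul_one, hWF, sub_self]

/-- **Derivative of the invariant vector of a stochastic matrix (Golub–Meyer identity):**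
for an irreducible row-stochastic F with probability left invariant vector map zfun,
I − F has a group inverse G = (I−F)^#, and for every E with zero row sums such that
F + εE is row-stochastic for all sufficiently small ε > 0, the map ε ↦ z(F + εE) is
(one-sidedly) differentiable at ε = 0 with derivative
(d/dε)|₀ z k (F + εE) = ∑ i j, z i(F) E i j G j k. -/
theorem golub_meyer_derivative_of_invariant_vector
    {L : ℕ}
    (F : Matrix (Fin L) (Fin L) ℝ)
    (hFirr : MatIrreducible F) (hFstoch : RowStochastic F)
    (zfun : Matrix (Fin L) (Fin L) ℝ → Fin L → ℝ)
    (hzfun : ∀ J, MatIrreducible J → RowStochastic J →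
      Matrix.vecMul (zfun J) J = zfun J ∧ ∑ i, zfun J i = 1) :
    ∃ G : Matrix (Fin L) (Fin L) ℝ, IsGroupInverse (1 - F) G ∧
      ∀ E : Matrix (Fin L) (Fin L) ℝ, (∀ i, ∑ j, E i j = 0) →
        (∀ᶠ ε in nhdsWithin (0 : ℝ) (Set.Ioi 0), RowStochastic (F + ε • E)) →
        ∀ k, HasDerivWithinAt (fun ε : ℝ => zfun (F + ε • E) k)
          (∑ i, ∑ j, zfun F i * E i j * G j k) (Set.Ici 0) 0 := by
  set z := zfun F
  set W := replicateRow (Fin L) z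
  obtain ⟨hzF, hz1⟩ := hzfun F hFirr hFstoch
  have hz_ne : ∑ i, z i ≠ 0 := hz1 ▸ one_ne_zero
  have hA : IsUnit (1 - F + W).det :=
    isUnit_det_one_sub_add_replicateRow hFirr hFstoch hzF hz1 hz_ne
  have hzA : z ᵥ* (1 - F + W) = z := vecMul_one_sub_add_replicateRow hzF hz1 z
  refine ⟨(1 - F + W)⁻¹ - W, isGroupInverse_one_sub_of_stationary hFstoch hzF hz1 hA,
    fun E hE hev k => ?_⟩
  have hpert : ∀ᶠ ε in 𝓝[>] (0 : ℝ), zfun (F + ε • E) = z ᵥ* (1 - F + W - ε • E)⁻¹ := by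
    filter_upwards [hev, (hFirr.eventually_add_smul E).filter_mono nhdsWithin_le_nhds]
      with ε hst hirr
    obtain ⟨hy, hy1⟩ := hzfun _ hirr hst
    rw [show 1 - F + W - ε • E = 1 - (F + ε • E) + W by abel]
    exact eq_vecMul_nonsing_inv_of_vecMul_eq
      (isUnit_det_one_sub_add_replicateRow hirr hst hy hy1 hz_ne)
      (vecMul_one_sub_add_replicateRow hy hy1 z)
  have h0 : zfun (F + (0 : ℝ) • E) = z ᵥ* (1 - F + W - (0 : ℝ) • E)⁻¹ := by
    simpa using eq_vecMul_nonsing_inv_of_vecMul_eq hA hzA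
  rw [← vecMul_nonsing_inv_mul_mul_nonsing_inv_apply hA hzA hE z k]
  refine ((hasDerivAt_vecMul_nonsing_inv_sub_smul hA E z k).hasDerivWithinAt
    |>.congr_of_eventuallyEq ?_ (congrFun h0 k)).Ici_of_Ioi
  filter_upwards [hpert] with ε h using congrFun h k
end

section
/- Uniform modulus of continuity for the reweighting kernel: There exists a continuous function γ : (0,∞)^L × (0,∞)^L → [0,∞) with γ(u, u) = 0 for all u ∈ (0,∞)^L, such that for every set X, every family ψ_1,…,ψ_L : X → [0,∞) with Σ_{k=1}^L ψ_k(x) > 0 for all x ∈ X, every x ∈ X, every i, j ∈ {1,…,L}, and every pair u, ũ ∈ (0,∞)^L, the kernel h_ij(u, x) = u_i ψ_j(x) / ( Σ_{k=1}^L u_k ψ_k(x) ) satisfies |h_ij(ũ, x) − h_ij(u, x)| ≤ γ(u, ũ). -/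
/-!
Writing `S_u = ∑ₖ uₖ ψₖ`, the difference of the two kernels is
`ψⱼ (vᵢ S_u - uᵢ S_v) / (S_u S_v) = ∑ₖ (vᵢ uₖ - uᵢ vₖ) ψⱼ ψₖ / (S_u S_v)`, and the weights
`ψⱼ ψₖ / (S_u S_v)` are at most `1 / (uⱼ vₖ)` because `uⱼ ψⱼ ≤ S_u` and `vₖ ψₖ ≤ S_v`.
So the ψ-free quantity `∑ᵢ ∑ⱼ ∑ₖ |vᵢ uₖ - uᵢ vₖ| / (uⱼ vₖ)` is a modulus: it is continuous
where `u, v > 0` and vanishes on the diagonal.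
-/

open Finset

section

variable {ι : Type*} {u v ψ : ι → ℝ}

theorem reweightingModulus_term_nonneg (hu : ∀ k, 0 < u k) (hv : ∀ k, 0 < v k) (i j k : ι) :
    0 ≤ |v i * u k - u i * v k| / (u j * v k) :=
  div_nonneg (abs_nonneg _) (mul_pos (hu j) (hv k)).le

variable [Fintype ι]

theorem sum_mul_pos_of_pos (hu : ∀ k, 0 < u k) (hψ : ∀ k, 0 ≤ ψ k)
    (hψ_sum : 0 < ∑ k, ψ k) : 0 < ∑ k, u k * ψ k := by
  obtain ⟨k, -, hk⟩ := exists_lt_of_sum_lt (s := univ) (f := 0) (g := ψ) (by simpa using hψ_sum)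
  exact sum_pos' (fun k _ => mul_nonneg (hu k).le (hψ k)) ⟨k, mem_univ k, mul_pos (hu k) hk⟩

theorem div_sum_sub_div_sum (i j : ι) (hSu : ∑ k, u k * ψ k ≠ 0) (hSv : ∑ k, v k * ψ k ≠ 0) :
    v i * ψ j / ∑ k, v k * ψ k - u i * ψ j / ∑ k, u k * ψ k =
      ∑ k, (v i * u k - u i * v k) * (ψ j * ψ k / ((∑ k, u k * ψ k) * ∑ k, v k * ψ k)) := by
  simp_rw [← mul_div_assoc, ← sum_div, mul_left_comm _ (ψ j), ← mul_sum, sub_mul, sum_sub_distrib,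
    mul_assoc, ← mul_sum]
  field_simp

theorem mul_div_sum_mul_sum_le (hu : ∀ k, 0 < u k) (hv : ∀ k, 0 < v k) (hψ : ∀ k, 0 ≤ ψ k)
    (hψ_sum : 0 < ∑ k, ψ k) (j k : ι) :
    ψ j * ψ k / ((∑ k, u k * ψ k) * ∑ k, v k * ψ k) ≤ (u j * v k)⁻¹ := by
  have hSu := sum_mul_pos_of_pos hu hψ hψ_sum
  have hSv := sum_mul_pos_of_pos hv hψ hψ_sum
  have hj : u j * ψ j ≤ ∑ k, u k * ψ k :=
    single_le_sum (fun k _ => mul_nonneg (hu k).le (hψ k)) (mem_univ j)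
  have hk : v k * ψ k ≤ ∑ k, v k * ψ k :=
    single_le_sum (fun k _ => mul_nonneg (hv k).le (hψ k)) (mem_univ k)
  rw [← one_div, div_le_div_iff₀ (mul_pos hSu hSv) (mul_pos (hu j) (hv k))]
  calc ψ j * ψ k * (u j * v k) = (u j * ψ j) * (v k * ψ k) := by ring
    _ ≤ _ := mul_le_mul hj hk (mul_nonneg (hv k).le (hψ k)) hSu.le
    _ = _ := (one_mul _).symm

theorem abs_div_sum_sub_div_sum_le (hu : ∀ k, 0 < u k) (hv : ∀ k, 0 < v k) (hψ : ∀ k, 0 ≤ ψ k)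
    (hψ_sum : 0 < ∑ k, ψ k) (i j : ι) :
    |v i * ψ j / ∑ k, v k * ψ k - u i * ψ j / ∑ k, u k * ψ k| ≤
      ∑ k, |v i * u k - u i * v k| / (u j * v k) := by
  have hSu := sum_mul_pos_of_pos hu hψ hψ_sum
  have hSv := sum_mul_pos_of_pos hv hψ hψ_sum
  rw [div_sum_sub_div_sum i j hSu.ne' hSv.ne']
  refine (abs_sum_le_sum_abs _ _).trans (sum_le_sum fun k _ => ?_)
  have hw : 0 ≤ ψ j * ψ k / ((∑ k, u k * ψ k) * ∑ k, v k * ψ k) :=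
    div_nonneg (mul_nonneg (hψ j) (hψ k)) (mul_pos hSu hSv).le
  rw [abs_mul, abs_of_nonneg hw, div_eq_mul_inv]
  exact mul_le_mul_of_nonneg_left (mul_div_sum_mul_sum_le hu hv hψ hψ_sum j k) (abs_nonneg _)

noncomputable def reweightingModulus (u v : ι → ℝ) : ℝ :=
  ∑ i, ∑ j, ∑ k, |v i * u k - u i * v k| / (u j * v k)

theorem reweightingModulus_self (u : ι → ℝ) : reweightingModulus u u = 0 := by
  simp [reweightingModulus]

theorem reweightingModulus_nonneg (hu : ∀ k, 0 < u k) (hv : ∀ k, 0 < v k) :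
    0 ≤ reweightingModulus u v :=
  sum_nonneg fun i _ => sum_nonneg fun j _ => sum_nonneg fun k _ =>
    reweightingModulus_term_nonneg hu hv i j k

theorem le_reweightingModulus (hu : ∀ k, 0 < u k) (hv : ∀ k, 0 < v k) (i j : ι) :
    ∑ k, |v i * u k - u i * v k| / (u j * v k) ≤ reweightingModulus u v := by
  have term_nonneg := reweightingModulus_term_nonneg hu hv
  calc ∑ k, |v i * u k - u i * v k| / (u j * v k)
      ≤ ∑ j, ∑ k, |v i * u k - u i * v k| / (u j * v k) :=
        single_le_sum (fun j _ => sum_nonneg fun k _ => term_nonneg i j k) (mem_univ j)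
    _ ≤ reweightingModulus u v :=
        single_le_sum (fun i _ => sum_nonneg fun j _ => sum_nonneg fun k _ => term_nonneg i j k)
          (mem_univ i)

theorem continuousOn_reweightingModulus :
    ContinuousOn (fun p : (ι → ℝ) × (ι → ℝ) => reweightingModulus p.1 p.2)
      {p | (∀ k, 0 < p.1 k) ∧ (∀ k, 0 < p.2 k)} := by
  unfold reweightingModulus
  fun_prop (disch := exact fun p hp => (mul_pos (hp.1 _) (hp.2 _)).ne')

end

/-- **Uniform modulus of continuity for the reweighting kernel:** there is a
continuous γ : (0,∞)^L × (0,∞)^L → [0,∞) with γ(u,u) = 0 such that for every set X,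
every family of nonnegative functions ψ with ∑ k ψ k > 0 pointwise, every x, i, j and
all positive u, ũ, the kernel h i j u x = u i ψ j x/∑ k u k ψ k x satisfies
|h i j ũ x − h i j u x| ≤ γ(u, ũ). -/
theorem reweighting_kernel_uniform_modulus {L : ℕ} :
    ∃ γ : (Fin L → ℝ) → (Fin L → ℝ) → ℝ,
      ContinuousOn (fun p : (Fin L → ℝ) × (Fin L → ℝ) => γ p.1 p.2)
        {p | (∀ k, 0 < p.1 k) ∧ (∀ k, 0 < p.2 k)} ∧
      (∀ u : Fin L → ℝ, (∀ k, 0 < u k) → γ u u = 0) ∧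
      (∀ u v : Fin L → ℝ, (∀ k, 0 < u k) → (∀ k, 0 < v k) → 0 ≤ γ u v) ∧
      ∀ (X : Type*) (ψ : Fin L → X → ℝ),
        (∀ i x, 0 ≤ ψ i x) → (∀ x, 0 < ∑ k, ψ k x) →
        ∀ (x : X) (i j : Fin L) (u v : Fin L → ℝ), (∀ k, 0 < u k) → (∀ k, 0 < v k) →
          |v i * ψ j x / (∑ k, v k * ψ k x) - u i * ψ j x / (∑ k, u k * ψ k x)| ≤
            γ u v := by
  refine ⟨reweightingModulus, continuousOn_reweightingModulus,
    fun u _ => reweightingModulus_self u, fun u v => reweightingModulus_nonneg,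
    fun X ψ hψ hψ_sum x i j u v hu hv => ?_⟩
  exact (abs_div_sum_sub_div_sum_le hu hv (fun k => hψ k x) (hψ_sum x) i j).trans
    (le_reweightingModulus hu hv i j)
end
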